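/- Let F be an n×m matrix with positive entries satisfying MLR, let b > 0, and suppose action n is implementable. Then the minimum-budget b-cost-robust contract is a monotone threshold contract: there exist B > 0 and j* ∈ [m] such that t_j = B for j ≥ j* and t_j = 0 for j < j*. -/

import Mathlib

/-!
Under MLR the likelihood ratio `F n j / F (n - 1) j` crosses `1` exactly once, at some outcome
`j*`, and the upper tails `∑_{j ≥ j*} F i j` increase with `i`. Robustness against all admissible
costs amounts to `b ≤ ∑ j, (F n j - F i j) * t j` for every `i < n`. For `i = n - 1` the right side
is at most `max t * D` with `D = ∑_{j ≥ j*} (F n j - F (n - 1) j)`, so every robust contract needs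
budget `b / D`, and feasibility forces `D > 0`. The contract paying `b / D` on `j ≥ j*` meets the
constraint of `n - 1` with equality and, by the monotonicity of the tails, those of all lower
actions as well.
-/

open Finset

section Tail

variable {ι : Type*} [Fintype ι] [LinearOrder ι]

theorem sum_filter_le_sum_filter_of_mlr {f g : ι → ℝ} (hf : ∑ j, f j = 1) (hg : ∑ j, g j = 1)
    (hfg : ∀ j j', j' < j → g j' * f j ≤ g j * f j') (k : ι) :
    ∑ j with k ≤ j, f j ≤ ∑ j with k ≤ j, g j := by
  have hcross : (∑ j with k ≤ j, f j) * ∑ j with ¬k ≤ j, g j ≤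
      (∑ j with k ≤ j, g j) * ∑ j with ¬k ≤ j, f j := by
    simp only [sum_mul_sum]
    refine sum_le_sum fun j hj => sum_le_sum fun j' hj' => ?_
    have := hfg j j' ((not_le.mp (mem_filter.mp hj').2).trans_le (mem_filter.mp hj).2)
    linarith
  rw [← sum_filter_add_sum_filter_not univ (k ≤ ·)] at hf hg
  rw [show ∑ j with ¬k ≤ j, f j = 1 - ∑ j with k ≤ j, f j by linarith,
    show ∑ j with ¬k ≤ j, g j = 1 - ∑ j with k ≤ j, g j by linarith] at hcross
  nlinarith

theorem exists_le_iff_le_of_mlr [Nonempty ι] {f g : ι → ℝ} (hf : ∀ j, 0 < f j)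
    (hsum : ∑ j, f j ≤ ∑ j, g j) (hfg : ∀ j j', j' < j → g j' * f j ≤ g j * f j') :
    ∃ k, ∀ j, k ≤ j ↔ f j ≤ g j := by
  set S := univ.filter fun j => f j ≤ g j
  have hS : S.Nonempty := by
    by_contra h
    rw [not_nonempty_iff_eq_empty, filter_eq_empty_iff] at h
    exact hsum.not_gt (sum_lt_sum_of_nonempty univ_nonempty fun j _ => not_le.mp (h (mem_univ j)))
  refine ⟨S.min' hS, fun j =>
    ⟨fun hkj => ?_, fun hj => S.min'_le j (mem_filter.mpr ⟨mem_univ j, hj⟩)⟩⟩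
  have hk := (mem_filter.mp (S.min'_mem hS)).2
  rcases hkj.eq_or_lt with h | h
  · exact h ▸ hk
  · nlinarith [hfg j _ h, hf j, hf (S.min' hS)]

theorem sum_mul_ite_le (d : ι → ℝ) (k : ι) (B : ℝ) :
    ∑ j, d j * (if k ≤ j then B else 0) = B * ∑ j with k ≤ j, d j := by
  rw [sum_filter, mul_sum]
  exact sum_congr rfl fun j _ => by split_ifs <;> ring

theorem monotone_sum_filter_of_mlr {κ : Type*} [PartialOrder κ] {F : κ → ι → ℝ}
    (hF : ∀ i, ∑ j, F i j = 1)
    (hMLR : ∀ i i' j j', i' < i → j' < j → F i j * F i' j' ≥ F i j' * F i' j) (k : ι) :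
    Monotone fun i => ∑ j with k ≤ j, F i j := by
  intro i i' h
  rcases h.lt_or_eq with h | rfl
  · exact sum_filter_le_sum_filter_of_mlr (hF i) (hF i') (hMLR i' i · · h) k
  · rfl

end Tail

theorem sum_mul_le_mul_sum_filter_nonneg {ι : Type*} [Fintype ι] {d t : ι → ℝ} {M : ℝ}
    (ht : ∀ j, 0 ≤ t j) (htM : ∀ j, t j ≤ M) :
    ∑ j, d j * t j ≤ M * ∑ j with 0 ≤ d j, d j := by
  rw [← sum_filter_add_sum_filter_not univ (0 ≤ d ·), mul_sum]
  have hneg : ∑ j with ¬0 ≤ d j, d j * t j ≤ 0 :=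
    sum_nonpos fun j hj => mul_nonpos_of_nonpos_of_nonneg (not_le.mp (mem_filter.mp hj).2).le (ht j)
  have hpos : ∑ j with 0 ≤ d j, d j * t j ≤ ∑ j with 0 ≤ d j, M * d j :=
    sum_le_sum fun j hj => by
      rw [mul_comm M]; exact mul_le_mul_of_nonneg_left (htM j) (mem_filter.mp hj).2
  linarith

section Contract

variable {n : ℕ} {ι : Type*} [Fintype ι]

def IsCostRobust (F : Fin (n + 1) → ι → ℝ) (b : ℝ) (t : ι → ℝ) : Prop :=
  ∀ c : Fin (n + 1) → ℝ, (∀ i, 0 ≤ c i) → Monotone c → c (Fin.last n) - c 0 ≤ b →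
    ∀ i, i ≠ Fin.last n →
      ∑ j, F i j * t j - c i ≤ ∑ j, F (Fin.last n) j * t j - c (Fin.last n)

theorem isCostRobust_iff {F : Fin (n + 1) → ι → ℝ} {b : ℝ} {t : ι → ℝ} (hb : 0 ≤ b) :
    IsCostRobust F b t ↔
      ∀ i ≠ Fin.last n, ∑ j, F i j * t j + b ≤ ∑ j, F (Fin.last n) j * t j := by
  constructor
  · intro ht i hi
    -- the worst admissible cost charges `b` for the top action only
    have hc_mono : Monotone fun i : Fin (n + 1) => if i = Fin.last n then b else 0 := by
      intro x y hxy
      dsimp only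
      split_ifs with hx hy hy
      · rfl
      · exact absurd (le_antisymm (Fin.le_last y) (hx ▸ hxy)) hy
      · exact hb
      · rfl
    have := ht _ (fun i => by split_ifs <;> simp [hb]) hc_mono (by split_ifs <;> simp [hb]) i hi
    simp only [hi, if_false, if_true] at this
    linarith
  · intro ht c _ hc hcb i hi
    linarith [ht i hi, hc (Fin.zero_le i)]

variable [LinearOrder ι]

theorem IsCostRobust.le_mul_sum_filter {F : Fin (n + 1) → ι → ℝ} {b : ℝ} {t : ι → ℝ}
    (ht : IsCostRobust F b t) (hb : 0 ≤ b) (ht0 : ∀ j, 0 ≤ t j) {M : ℝ} (htM : ∀ j, t j ≤ M)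
    {i : Fin (n + 1)} (hi : i ≠ Fin.last n) {k : ι} (hk : ∀ j, k ≤ j ↔ F i j ≤ F (Fin.last n) j) :
    b ≤ M * ∑ j with k ≤ j, (F (Fin.last n) j - F i j) := by
  have hfilter : ∀ j, k ≤ j ↔ 0 ≤ F (Fin.last n) j - F i j := fun j => (hk j).trans sub_nonneg.symm
  simp only [hfilter]
  calc b ≤ ∑ j, (F (Fin.last n) j - F i j) * t j := by
        simp only [sub_mul, sum_sub_distrib]
        linarith [(isCostRobust_iff hb).1 ht i hi]
    _ ≤ _ := sum_mul_le_mul_sum_filter_nonneg ht0 htM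

theorem isCostRobust_threshold {F : Fin (n + 1) → ι → ℝ} (hF : ∀ i, ∑ j, F i j = 1)
    (hMLR : ∀ i i' j j', i' < i → j' < j → F i j * F i' j' ≥ F i j' * F i' j)
    {b : ℝ} (hb : 0 ≤ b) {i₀ : Fin (n + 1)} (hi₀ : ∀ i ≠ Fin.last n, i ≤ i₀) {k : ι} {B : ℝ}
    (hB : 0 ≤ B) (hbB : b ≤ B * ∑ j with k ≤ j, (F (Fin.last n) j - F i₀ j)) :
    IsCostRobust F b fun j => if k ≤ j then B else 0 := by
  rw [isCostRobust_iff hb]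
  intro i hi
  simp only [sum_mul_ite_le]
  have := mul_le_mul_of_nonneg_left (monotone_sum_filter_of_mlr hF hMLR k (hi₀ i hi)) hB
  rw [sum_sub_distrib, mul_sub] at hbB
  linarith

end Contract

/-- Under MLR, the minimum-budget `b`-cost-robust contract is a monotone
threshold contract: full budget `B` above some threshold `j*`, zero below. -/
theorem mlr_min_budget_robust_is_threshold
    (n m : ℕ) (hn : 0 < n) (hm : 0 < m)
    (F : Fin (n + 1) → Fin m → ℝ)
    (hFpos : ∀ i j, 0 < F i j)
    (hFsum : ∀ i, ∑ j, F i j = 1)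
    (hMLR : ∀ (i i' : Fin (n + 1)) (j j' : Fin m), i' < i → j' < j →
      F i j * F i' j' ≥ F i j' * F i' j)
    (b : ℝ) (hb : 0 < b)
    (hfeas : ∃ t : Fin m → ℝ, (∀ j, 0 ≤ t j) ∧
      (∀ i, i ≠ Fin.last n →
        ∑ j, F i j * t j - 0 ≤ ∑ j, F (Fin.last n) j * t j - b)) :
    ∃ (B : ℝ) (jStar : Fin m), 0 < B ∧
      (let t : Fin m → ℝ := fun j => if jStar ≤ j then B else 0
      (∀ c : Fin (n + 1) → ℝ, (∀ i, 0 ≤ c i) → Monotone c →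
        c (Fin.last n) - c 0 ≤ b →
        (∀ i, i ≠ Fin.last n →
          ∑ j, F i j * t j - c i ≤
            ∑ j, F (Fin.last n) j * t j - c (Fin.last n))) ∧
      (∀ t' : Fin m → ℝ, (∀ j, 0 ≤ t' j) →
        (∀ c : Fin (n + 1) → ℝ, (∀ i, 0 ≤ c i) → Monotone c →
          c (Fin.last n) - c 0 ≤ b →
          (∀ i, i ≠ Fin.last n →
            ∑ j, F i j * t' j - c i ≤
              ∑ j, F (Fin.last n) j * t' j - c (Fin.last n))) →
        Finset.univ.sup' ⟨(⟨0, hm⟩ : Fin m), Finset.mem_univ _⟩ t ≤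
          Finset.univ.sup' ⟨(⟨0, hm⟩ : Fin m), Finset.mem_univ _⟩ t')) := by
  have : Nonempty (Fin m) := ⟨⟨0, hm⟩⟩
  let i₀ : Fin (n + 1) := ⟨n - 1, by omega⟩
  have hi₀ : i₀ ≠ Fin.last n := by simp [i₀, Fin.ext_iff]; omega
  have hle_i₀ : ∀ i ≠ Fin.last n, i ≤ i₀ := fun i hi => by
    have := Fin.val_lt_last hi
    simp only [Fin.le_def, i₀]; omega
  obtain ⟨k, hk⟩ := exists_le_iff_le_of_mlr (hFpos i₀) (by rw [hFsum, hFsum])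
    (hMLR _ i₀ · · (Fin.lt_last_iff_ne_last.mpr hi₀))
  set D := ∑ j with k ≤ j, (F (Fin.last n) j - F i₀ j)
  have hbudget : ∀ t, (∀ j, 0 ≤ t j) → IsCostRobust F b t → b ≤ univ.sup' univ_nonempty t * D :=
    fun t ht0 ht => ht.le_mul_sum_filter hb.le ht0 (fun j => le_sup' t (mem_univ j)) hi₀ hk
  have hD : 0 < D := by
    obtain ⟨t, ht0, ht⟩ := hfeas
    have := hbudget t ht0 ((isCostRobust_iff hb.le).mpr fun i hi => by linarith [ht i hi])
    exact pos_of_mul_pos_right (hb.trans_le this) ((ht0 k).trans (le_sup' t (mem_univ k)))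
  refine ⟨b / D, k, div_pos hb hD,
    isCostRobust_threshold hFsum hMLR hb.le hle_i₀ (div_pos hb hD).le (div_mul_cancel₀ b hD.ne').ge,
    fun t ht0 ht => sup'_le _ _ fun j _ => ?_⟩
  split_ifs
  · exact (div_le_iff₀ hD).mpr (hbudget t ht0 ht)
  · exact (ht0 k).trans (le_sup' t (mem_univ k))
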